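/- arXiv:2405.04616 — 2 statements merged into one kernel-verified Lean document; each statement's English description precedes it below -/
import Mathlib

section
/- Let 𝔘 be a Banach algebra with 𝔘♯ symmetrically pseudo-amenable, and X a Banach 𝔘-bimodule. Then every bounded central derivation δ : 𝔘 → X (i.e., δ(𝔘) ⊆ Z_𝔘(X)) is zero. -/
open Filter Topology

universe u

/-- A realization of the projective Banach-space tensor square `A ⊗̂ A` of a (non-unital)
Banach algebra `A`, together with the canonical bimodule operations `a•t`, `t•a`, the
"opposite" operations `a∘t`, `t∘a`, the product maps `π`, `π°` and the flip map, each
characterized by its values on elementary tensors.  The norm is the projective tensor norm: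
`‖a ⊗ b‖ ≤ ‖a‖‖b‖` and every element is an absolutely convergent sum of elementary tensors
whose total norm is arbitrarily close to its norm; moreover bounded bilinear maps lift. -/
structure ProjTensorSquare (A : Type u) [NonUnitalNormedRing A] [NormedSpace ℂ A]
    [IsScalarTower ℂ A A] [SMulCommClass ℂ A A] [CompleteSpace A] where
  /-- the underlying Banach space of `A ⊗̂ A` -/
  T : Type u
  [nacg : NormedAddCommGroup T]
  [nsp : NormedSpace ℂ T]
  [cplt : CompleteSpace T]
  /-- the canonical bilinear map `(a, b) ↦ a ⊗ b` -/
  tmul : A →L[ℂ] A →L[ℂ] T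
  norm_tmul_le : ∀ a b : A, ‖tmul a b‖ ≤ ‖a‖ * ‖b‖
  /-- the projective norm property -/
  exists_rep : ∀ (t : T) (ε : ℝ), 0 < ε → ∃ u v : ℕ → A,
      Summable (fun n => ‖u n‖ * ‖v n‖) ∧ HasSum (fun n => tmul (u n) (v n)) t ∧
      ∑' n, ‖u n‖ * ‖v n‖ ≤ ‖t‖ + ε
  /-- the universal property: bounded bilinear maps into a Banach space lift to `T` -/
  lift : ∀ {X : Type u} [NormedAddCommGroup X] [NormedSpace ℂ X] [CompleteSpace X]
      (f : A →L[ℂ] A →L[ℂ] X), ∃ g : T →L[ℂ] X, (∀ a b, g (tmul a b) = f a b) ∧ ‖g‖ ≤ ‖f‖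
  /-- the left module action: `a • (b ⊗ c) = (a * b) ⊗ c` -/
  lmul : A → T →L[ℂ] T
  lmul_tmul : ∀ a b c, lmul a (tmul b c) = tmul (a * b) c
  /-- the right module action: `(b ⊗ c) • a = b ⊗ (c * a)` -/
  rmul : A → T →L[ℂ] T
  rmul_tmul : ∀ a b c, rmul a (tmul b c) = tmul b (c * a)
  /-- the left opposite action: `a ∘ (b ⊗ c) = b ⊗ (a * c)` -/
  lcirc : A → T →L[ℂ] T
  lcirc_tmul : ∀ a b c, lcirc a (tmul b c) = tmul b (a * c)
  /-- the right opposite action: `(b ⊗ c) ∘ a = (b * a) ⊗ c` -/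
  rcirc : A → T →L[ℂ] T
  rcirc_tmul : ∀ a b c, rcirc a (tmul b c) = tmul (b * a) c
  /-- the product map `π : b ⊗ c ↦ b * c` -/
  π : T →L[ℂ] A
  π_tmul : ∀ b c, π (tmul b c) = b * c
  /-- the opposite product map `π° : b ⊗ c ↦ c * b` -/
  πop : T →L[ℂ] A
  πop_tmul : ∀ b c, πop (tmul b c) = c * b
  /-- the flip map `(b ⊗ c)° = c ⊗ b` -/
  flip : T →L[ℂ] T
  flip_tmul : ∀ b c, flip (tmul b c) = tmul c b

attribute [instance] ProjTensorSquare.nacg ProjTensorSquare.nsp ProjTensorSquare.cplt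

namespace ProjTensorSquare

variable {A : Type u} [NonUnitalNormedRing A] [NormedSpace ℂ A]
    [IsScalarTower ℂ A A] [SMulCommClass ℂ A A] [CompleteSpace A]

/-- `t` is an approximate diagonal for `A` consisting of symmetric tensors, along the
filter `l`:  each `t i` is symmetric, `a • tᵢ - tᵢ • a → 0` and `π(tᵢ) a → a` for all `a`. -/
def IsSymmApproxDiagonal (P : ProjTensorSquare A) {ι : Type u} (l : Filter ι)
    (t : ι → P.T) : Prop :=
  (∀ i, P.flip (t i) = t i) ∧
  (∀ a : A, Tendsto (fun i => P.lmul a (t i) - P.rmul a (t i)) l (𝓝 0)) ∧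
  (∀ a : A, Tendsto (fun i => P.π (t i) * a) l (𝓝 a))

/-- A Banach algebra is symmetrically pseudo-amenable if it has a (not necessarily bounded)
approximate diagonal consisting of symmetric tensors. -/
def SymmPseudoAmenable (P : ProjTensorSquare A) : Prop :=
  ∃ (ι : Type u) (l : Filter ι) (t : ι → P.T), l.NeBot ∧ P.IsSymmApproxDiagonal l t

end ProjTensorSquare

/-- A Banach `A`-bimodule: a Banach space with commuting bounded left and right `A`-actions. -/
structure BanachBimodule (A X : Type u) [NonUnitalNormedRing A] [NormedSpace ℂ A]
    [NormedAddCommGroup X] [NormedSpace ℂ X] where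
  /-- the left action `(a, x) ↦ a • x` -/
  lsmul : A →L[ℂ] X →L[ℂ] X
  /-- the right action `(a, x) ↦ x • a` -/
  rsmul : A →L[ℂ] X →L[ℂ] X
  lsmul_mul : ∀ a b x, lsmul (a * b) x = lsmul a (lsmul b x)
  rsmul_mul : ∀ a b x, rsmul (a * b) x = rsmul b (rsmul a x)
  lsmul_rsmul : ∀ a b x, lsmul a (rsmul b x) = rsmul b (lsmul a x)

namespace BanachBimodule

variable {A X : Type u} [NonUnitalNormedRing A] [NormedSpace ℂ A]
  [NormedAddCommGroup X] [NormedSpace ℂ X]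

/-- `D(ab) = D(a)·b + a·D(b)` -/
def IsDerivation (M : BanachBimodule A X) (D : A → X) : Prop :=
  ∀ a b, D (a * b) = M.rsmul b (D a) + M.lsmul a (D b)

/-- `D(ab + ba) = D(a)·b + a·D(b) + D(b)·a + b·D(a)` -/
def IsJordanDerivation (M : BanachBimodule A X) (D : A → X) : Prop :=
  ∀ a b, D (a * b + b * a) =
    M.rsmul b (D a) + M.lsmul a (D b) + M.rsmul a (D b) + M.lsmul b (D a)

/-- `D(ab − ba) = D(a)·b + a·D(b) − D(b)·a − b·D(a)` -/
def IsLieDerivation (M : BanachBimodule A X) (D : A → X) : Prop :=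
  ∀ a b, D (a * b - b * a) =
    M.rsmul b (D a) + M.lsmul a (D b) - M.rsmul a (D b) - M.lsmul b (D a)

/-- the center `Z_𝔘(X) = {x ∈ X | a·x = x·a for all a ∈ 𝔘}` -/
def center (M : BanachBimodule A X) : Set X := {x | ∀ a, M.lsmul a x = M.rsmul a x}

/-- the left action extended to the `ℓ¹`-unitization `𝔘♯`, via `1 • x = x` -/
noncomputable def uLsmul (M : BanachBimodule A X) (a : WithLp 1 (Unitization ℂ A)) (x : X) : X :=
  (WithLp.equiv 1 (Unitization ℂ A) a).fst • x + M.lsmul ((WithLp.equiv 1 (Unitization ℂ A)) a).snd x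

/-- the right action extended to the `ℓ¹`-unitization `𝔘♯`, via `x • 1 = x` -/
noncomputable def uRsmul (M : BanachBimodule A X) (a : WithLp 1 (Unitization ℂ A)) (x : X) : X :=
  (WithLp.equiv 1 (Unitization ℂ A) a).fst • x + M.rsmul ((WithLp.equiv 1 (Unitization ℂ A)) a).snd x

end BanachBimodule

/-!
Extend `δ` to the unitization `𝔄 = 𝔘♯` by `δ(λ, a) = δ a` and let `Φ : 𝔄 ⊗̂ 𝔄 → X` be the lift of
`u ⊗ v ↦ u • δ v`. Then `Φ (a • t) = a • Φ t`, `Φ (t • a) = Φ t • a + π t • δ a`, and by centrality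
`Φ t° + Φ t = δ (π t)`. For a symmetric tensor `t` this makes `Φ t = δ (π t) / 2` central, so
`Φ (a • t - t • a) = -π t • δ a`. Along a symmetric approximate diagonal `tᵢ` the left side tends
to `0`, so `eᵢ • δ a → 0` for the left approximate identity `eᵢ = π tᵢ`. Testing this against
`δ (b c) = δ b • c + b • δ c` gives `b • δ c = 0`, so by centrality also `δ b • c = 0`, and
finally `δ c = lim δ (eᵢ c) = lim (δ eᵢ • c + eᵢ • δ c) = 0`.
-/

section

variable {A X : Type u} [NonUnitalNormedRing A] [NormedSpace ℂ A]
  [NormedAddCommGroup X] [NormedSpace ℂ X]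

local notation "𝔄" => WithLp 1 (Unitization ℂ A)

open WithLp

namespace BanachBimodule

variable (M : BanachBimodule A X)

lemma uLsmul_add (u : 𝔄) (x y : X) : M.uLsmul u (x + y) = M.uLsmul u x + M.uLsmul u y := by
  simp only [uLsmul, map_add, smul_add, add_add_add_comm]

lemma uLsmul_smul (u : 𝔄) (c : ℂ) (x : X) : M.uLsmul u (c • x) = c • M.uLsmul u x := by
  simp only [uLsmul, map_smul, smul_add, smul_comm c]

lemma uRsmul_smul (u : 𝔄) (c : ℂ) (x : X) : M.uRsmul u (c • x) = c • M.uRsmul u x := by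
  simp only [uRsmul, map_smul, smul_add, smul_comm c]

lemma uLsmul_rsmul (u : 𝔄) (b : A) (x : X) :
    M.uLsmul u (M.rsmul b x) = M.rsmul b (M.uLsmul u x) := by
  simp only [uLsmul, map_add, map_smul, M.lsmul_rsmul]

lemma uLsmul_uRsmul (u v : 𝔄) (x : X) :
    M.uLsmul u (M.uRsmul v x) = M.uRsmul v (M.uLsmul u x) := by
  simp only [uLsmul, uRsmul, map_add, map_smul, smul_add, M.lsmul_rsmul,
    smul_comm (WithLp.equiv 1 _ u).fst (WithLp.equiv 1 _ v).fst]
  abel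

lemma uLsmul_eq_uRsmul_of_mem_center {x : X} (hx : x ∈ M.center) (u : 𝔄) :
    M.uLsmul u x = M.uRsmul u x := by
  simp only [uLsmul, uRsmul, hx _]

lemma uRsmul_inr (b : A) (x : X) : M.uRsmul (toLp 1 (b : Unitization ℂ A)) x = M.rsmul b x := by
  simp [uRsmul]

end BanachBimodule

variable [IsScalarTower ℂ A A] [SMulCommClass ℂ A A]

namespace WithLp

noncomputable def unitizationFstL : 𝔄 →L[ℂ] ℂ :=
  LinearMap.mkContinuous
    ((Unitization.fstHom ℂ A).toLinearMap ∘ₗ (WithLp.linearEquiv 1 ℂ (Unitization ℂ A)).toLinearMap)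
    1 fun u => by
      rw [WithLp.unitization_norm_def u, one_mul]
      simp

noncomputable def unitizationSndL : 𝔄 →L[ℂ] A :=
  LinearMap.mkContinuous
    ((Unitization.sndHom ℂ ℂ A) ∘ₗ (WithLp.linearEquiv 1 ℂ (Unitization ℂ A)).toLinearMap)
    1 fun u => by
      rw [WithLp.unitization_norm_def u, one_mul]
      simp

@[simp] lemma unitizationFstL_apply (u : 𝔄) :
    unitizationFstL u = (WithLp.equiv 1 _ u).fst := rfl

@[simp] lemma unitizationSndL_apply (u : 𝔄) :
    unitizationSndL u = (WithLp.equiv 1 _ u).snd := rfl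

end WithLp

noncomputable def ContinuousLinearMap.unitizationExtend (δ : A →L[ℂ] X) : 𝔄 →L[ℂ] X :=
  δ.comp unitizationSndL

@[simp] lemma ContinuousLinearMap.unitizationExtend_apply (δ : A →L[ℂ] X) (u : 𝔄) :
    δ.unitizationExtend u = δ (WithLp.equiv 1 _ u).snd := rfl

@[simp] lemma ContinuousLinearMap.unitizationExtend_inr (δ : A →L[ℂ] X) (a : A) :
    δ.unitizationExtend (toLp 1 (a : Unitization ℂ A)) = δ a := by
  simp

namespace BanachBimodule

variable (M : BanachBimodule A X)

noncomputable def uLsmulL : 𝔄 →L[ℂ] X →L[ℂ] X :=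
  unitizationFstL.smulRight (ContinuousLinearMap.id ℂ X) + M.lsmul.comp unitizationSndL

noncomputable def uRsmulL : 𝔄 →L[ℂ] X →L[ℂ] X :=
  unitizationFstL.smulRight (ContinuousLinearMap.id ℂ X) + M.rsmul.comp unitizationSndL

lemma uLsmulL_apply (u : 𝔄) (x : X) : M.uLsmulL u x = M.uLsmul u x := rfl

lemma uRsmulL_apply (u : 𝔄) (x : X) : M.uRsmulL u x = M.uRsmul u x := rfl

lemma uLsmul_mul (u v : 𝔄) (x : X) : M.uLsmul (u * v) x = M.uLsmul u (M.uLsmul v x) := by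
  simp only [uLsmul, WithLp.equiv_apply, unitization_mul, Unitization.fst_mul,
    Unitization.snd_mul, map_add, map_smul, add_apply, smul_apply, M.lsmul_mul, smul_add,
    smul_smul]
  abel

lemma uLsmul_lsmul (u : 𝔄) (b : A) (x : X) :
    M.uLsmul u (M.lsmul b x) = M.lsmul (ofLp (u * toLp 1 (b : Unitization ℂ A))).snd x := by
  simp [uLsmul, unitization_mul, M.lsmul_mul]

lemma unitizationExtend_mem_center {δ : A →L[ℂ] X} (hcentral : ∀ a, δ a ∈ M.center) (u : 𝔄) :
    δ.unitizationExtend u ∈ M.center :=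
  hcentral _

lemma IsDerivation.unitizationExtend {δ : A →L[ℂ] X} (hδ : M.IsDerivation δ) (u v : 𝔄) :
    δ.unitizationExtend (u * v) =
      M.uRsmul v (δ.unitizationExtend u) + M.uLsmul u (δ.unitizationExtend v) := by
  simp only [ContinuousLinearMap.unitizationExtend_apply, unitization_mul, Unitization.snd_mul,
    map_add, map_smul, hδ (ofLp u).snd (ofLp v).snd, uRsmul, uLsmul, WithLp.equiv_apply]
  abel

end BanachBimodule

lemma ProjTensorSquare.ext_tmul {B : Type u} [NonUnitalNormedRing B] [NormedSpace ℂ B]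
    [IsScalarTower ℂ B B] [SMulCommClass ℂ B B] [CompleteSpace B] (P : ProjTensorSquare B)
    {Y : Type*} [NormedAddCommGroup Y] [NormedSpace ℂ Y] {f g : P.T →L[ℂ] Y}
    (h : ∀ a b, f (P.tmul a b) = g (P.tmul a b)) : f = g := by
  ext t
  obtain ⟨u, v, -, hsum, -⟩ := P.exists_rep t 1 one_pos
  exact (hsum.mapL f).unique (by simpa only [h] using hsum.mapL g)

section TensorSquare

variable [CompleteSpace A] [CompleteSpace X]

namespace BanachBimodule

variable (M : BanachBimodule A X) (δ : A →L[ℂ] X)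
  (P : ProjTensorSquare (WithLp 1 (Unitization ℂ A)))

noncomputable def derivationTensorMap : P.T →L[ℂ] X :=
  (P.lift (((ContinuousLinearMap.compL ℂ 𝔄 X X).flip δ.unitizationExtend).comp M.uLsmulL)).choose

variable {δ}

lemma derivationTensorMap_tmul (u v : 𝔄) :
    M.derivationTensorMap δ P (P.tmul u v) = M.uLsmul u (δ.unitizationExtend v) :=
  (P.lift _).choose_spec.1 u v

lemma derivationTensorMap_lmul (a : 𝔄) (t : P.T) :
    M.derivationTensorMap δ P (P.lmul a t) = M.uLsmul a (M.derivationTensorMap δ P t) := by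
  suffices (M.derivationTensorMap δ P).comp (P.lmul a) =
      (M.uLsmulL a).comp (M.derivationTensorMap δ P) from DFunLike.congr_fun this t
  refine P.ext_tmul fun u v => ?_
  simp only [ContinuousLinearMap.comp_apply, P.lmul_tmul, derivationTensorMap_tmul, uLsmulL_apply,
    uLsmul_mul]

lemma derivationTensorMap_rmul (hδ : M.IsDerivation δ) (a : 𝔄) (t : P.T) :
    M.derivationTensorMap δ P (P.rmul a t) =
      M.uRsmul a (M.derivationTensorMap δ P t) + M.uLsmul (P.π t) (δ.unitizationExtend a) := by
  suffices (M.derivationTensorMap δ P).comp (P.rmul a) =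
      (M.uRsmulL a).comp (M.derivationTensorMap δ P) +
        (M.uLsmulL.flip (δ.unitizationExtend a)).comp P.π from DFunLike.congr_fun this t
  refine P.ext_tmul fun u v => ?_
  simp only [ContinuousLinearMap.comp_apply, add_apply, P.rmul_tmul, derivationTensorMap_tmul,
    uRsmulL_apply, ContinuousLinearMap.flip_apply, uLsmulL_apply, P.π_tmul,
    hδ.unitizationExtend, uLsmul_add, uLsmul_uRsmul, uLsmul_mul]

lemma derivationTensorMap_flip_add (hδ : M.IsDerivation δ) (hcentral : ∀ a, δ a ∈ M.center)
    (t : P.T) :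
    M.derivationTensorMap δ P (P.flip t) + M.derivationTensorMap δ P t =
      δ.unitizationExtend (P.π t) := by
  suffices (M.derivationTensorMap δ P).comp P.flip + M.derivationTensorMap δ P =
      δ.unitizationExtend.comp P.π from DFunLike.congr_fun this t
  refine P.ext_tmul fun u v => ?_
  simp only [ContinuousLinearMap.comp_apply, add_apply, P.flip_tmul, derivationTensorMap_tmul,
    P.π_tmul, hδ.unitizationExtend,
    M.uLsmul_eq_uRsmul_of_mem_center (M.unitizationExtend_mem_center hcentral u) v]

lemma derivationTensorMap_lmul_sub_rmul (hδ : M.IsDerivation δ)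
    (hcentral : ∀ a, δ a ∈ M.center) {t : P.T} (ht : P.flip t = t) (a : 𝔄) :
    M.derivationTensorMap δ P (P.lmul a t - P.rmul a t) =
      -M.uLsmul (P.π t) (δ.unitizationExtend a) := by
  have half : M.derivationTensorMap δ P t = (2 : ℂ)⁻¹ • δ.unitizationExtend (P.π t) := by
    rw [← M.derivationTensorMap_flip_add P hδ hcentral, ht, ← two_smul ℂ, smul_smul]
    norm_num
  have central : M.uLsmul a (M.derivationTensorMap δ P t) =
      M.uRsmul a (M.derivationTensorMap δ P t) := by
    rw [half, uLsmul_smul, uRsmul_smul,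
      M.uLsmul_eq_uRsmul_of_mem_center (M.unitizationExtend_mem_center hcentral _)]
  rw [map_sub, derivationTensorMap_lmul, derivationTensorMap_rmul _ _ hδ, central]
  abel

theorem tendsto_uLsmul_π_of_isSymmApproxDiagonal (hδ : M.IsDerivation δ)
    (hcentral : ∀ a, δ a ∈ M.center) {ι : Type u} {l : Filter ι} {t : ι → P.T}
    (ht : P.IsSymmApproxDiagonal l t) (u : 𝔄) :
    Tendsto (fun i => M.uLsmul (P.π (t i)) (δ.unitizationExtend u)) l (𝓝 0) := by
  have h := ((M.derivationTensorMap δ P).continuous.tendsto 0).comp (ht.2.1 u)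
  simp only [Function.comp_def, map_zero,
    M.derivationTensorMap_lmul_sub_rmul P hδ hcentral (ht.1 _)] at h
  simpa using h.neg

end BanachBimodule

end TensorSquare

namespace BanachBimodule

variable (M : BanachBimodule A X) {δ : A →L[ℂ] X} {ι : Type*} {l : Filter ι} [l.NeBot]
  {e : ι → WithLp 1 (Unitization ℂ A)}

theorem lsmul_eq_zero_of_tendsto_uLsmul (hδ : M.IsDerivation δ)
    (he : ∀ b : A, Tendsto (fun i => e i * toLp 1 (b : Unitization ℂ A)) l
      (𝓝 (toLp 1 (b : Unitization ℂ A))))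
    (h0 : ∀ c, Tendsto (fun i => M.uLsmul (e i) (δ c)) l (𝓝 0)) (b c : A) :
    M.lsmul b (δ c) = 0 := by
  have split : ∀ i, M.uLsmul (e i) (δ (b * c)) = M.rsmul c (M.uLsmul (e i) (δ b)) +
      M.lsmul (ofLp (e i * toLp 1 (b : Unitization ℂ A))).snd (δ c) := fun i => by
    rw [hδ, uLsmul_add, uLsmul_rsmul, uLsmul_lsmul]
  have lim_rsmul : Tendsto (fun i => M.rsmul c (M.uLsmul (e i) (δ b))) l (𝓝 0) := by
    simpa only [map_zero, Function.comp_def] using ((M.rsmul c).continuous.tendsto 0).comp (h0 b)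
  have lim_lsmul : Tendsto (fun i => M.lsmul (ofLp (e i * toLp 1 (b : Unitization ℂ A))).snd (δ c))
      l (𝓝 (M.lsmul b (δ c))) :=
    (((M.lsmul.flip (δ c)).comp unitizationSndL).continuous.tendsto _).comp (he b)
  have lim := lim_rsmul.add lim_lsmul
  simp only [← split, zero_add] at lim
  exact tendsto_nhds_unique lim (h0 _)

theorem eq_zero_of_tendsto_uLsmul (hδ : M.IsDerivation δ) (hcentral : ∀ a, δ a ∈ M.center)
    (he : ∀ b : A, Tendsto (fun i => e i * toLp 1 (b : Unitization ℂ A)) l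
      (𝓝 (toLp 1 (b : Unitization ℂ A))))
    (h0 : ∀ c, Tendsto (fun i => M.uLsmul (e i) (δ c)) l (𝓝 0)) :
    δ = 0 := by
  ext c
  have split : ∀ i, δ.unitizationExtend (e i * toLp 1 (c : Unitization ℂ A)) =
      M.uLsmul (e i) (δ c) := fun i => by
    rw [hδ.unitizationExtend, uRsmul_inr, ← M.unitizationExtend_mem_center hcentral (e i) c,
      ContinuousLinearMap.unitizationExtend_apply, M.lsmul_eq_zero_of_tendsto_uLsmul hδ he h0,
      zero_add, ContinuousLinearMap.unitizationExtend_inr]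
  have lim := (δ.unitizationExtend.continuous.tendsto _).comp (he c)
  simp only [Function.comp_def, split, ContinuousLinearMap.unitizationExtend_inr] at lim
  exact tendsto_nhds_unique lim (h0 c)

end BanachBimodule

end

/-- Let `𝔘` be a Banach algebra with `𝔘♯` symmetrically pseudo-amenable, and
`X` a Banach `𝔘`-bimodule.  Then every bounded central derivation `δ : 𝔘 → X` is zero. -/
theorem central_derivation_eq_zero {A X : Type u} [NonUnitalNormedRing A] [NormedSpace ℂ A]
    [IsScalarTower ℂ A A] [SMulCommClass ℂ A A] [CompleteSpace A]
    [NormedAddCommGroup X] [NormedSpace ℂ X] [CompleteSpace X]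
    (P : ProjTensorSquare (WithLp 1 (Unitization ℂ A))) (hP : P.SymmPseudoAmenable)
    (M : BanachBimodule A X) (δ : A →L[ℂ] X)
    (hδ : M.IsDerivation δ) (hcentral : ∀ a, δ a ∈ M.center) :
    δ = 0 := by
  obtain ⟨ι, l, t, hl, ht⟩ := hP
  refine M.eq_zero_of_tendsto_uLsmul hδ hcentral (fun b => ht.2.2 _) fun c => ?_
  simpa only [ContinuousLinearMap.unitizationExtend_inr] using
    M.tendsto_uLsmul_π_of_isSymmApproxDiagonal P hδ hcentral ht (WithLp.toLp 1 c)
end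

section
/- Let 𝔘 be a Banach algebra whose unitization 𝔘♯ is symmetrically pseudo-amenable with a symmetric approximate diagonal {t_λ}. Suppose X is a Banach 𝔘-bimodule such that for each x ∈ X the net {ψ_x(t_λ)} is bounded, and D : 𝔘 → X is a bounded Lie derivation such that {Φ_D(t_λ)} is bounded. Then there exist a bounded derivation d : 𝔘 → X and a bounded central trace τ : 𝔘 → Z_𝔘(X) with D = d + τ. -/
open Filter Topology

universe u

/-!
Write `ψ_x(s)` and `Φ_D(s)` for the operators on `𝔘♯ ⊗̂ 𝔘♯`. Expanding the Lie identity on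
elementary tensors gives, for `a ∈ 𝔘`,
`ψ_{D a}(t) + [a, Φ_D(t)] = Φ_D(a·t - t·a) - Φ_D(t∘a - a∘t) + π(t)·D a`,
and along a symmetric approximate diagonal the right side tends to `D a`. The net
`ψ_{D a}(t_λ)` is bounded and asymptotically central, hence
`ψ_{ψ_{D a}(t_λ)}(s) ≈ π(s)·ψ_{D a}(t_λ)`; substituting the identity into `ψ_{D a}(t_μ)` then
shows that `ψ_{D a}(t_λ)` is Cauchy. Its limit `τ a` is central and vanishes on commutators, and
`D - τ` is the pointwise limit of the uniformly bounded inner derivations `ad Φ_D(t_λ)`, hence a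
bounded derivation. The argument runs in any unital Banach algebra with a unital bimodule and is
applied to `𝔘♯`.
-/
theorem exists_tendsto_of_dist_le {α ι : Type*} [PseudoMetricSpace α] [CompleteSpace α]
    {l : Filter ι} [l.NeBot] {y : ι → α} {ε : ι → ℝ} (hε : Tendsto ε l (𝓝 0))
    (h : ∀ μ, ∃ δ : ι → ℝ, Tendsto δ l (𝓝 0) ∧ ∀ i, dist (y μ) (y i) ≤ ε μ + δ i) :
    ∃ z, Tendsto y l (𝓝 z) := by
  have dist_le : ∀ μ ν, dist (y μ) (y ν) ≤ ε μ + ε ν := by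
    intro μ ν
    obtain ⟨δ, hδ, hμ⟩ := h μ
    obtain ⟨δ', hδ', hν⟩ := h ν
    refine ge_of_tendsto' (by simpa using (hδ.const_add (ε μ)).add (hδ'.const_add (ε ν)))
      fun i => ?_
    exact (dist_triangle_right _ _ (y i)).trans (add_le_add (hμ i) (hν i))
  refine cauchy_map_iff_exists_tendsto.mp (Metric.cauchy_iff.mpr ⟨map_neBot, fun r hr => ?_⟩)
  refine ⟨y '' {μ | ε μ < r / 2}, image_mem_map (hε.eventually_lt_const (half_pos hr)), ?_⟩
  rintro _ ⟨μ, hμ, rfl⟩ _ ⟨ν, hν, rfl⟩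
  linarith [dist_le μ ν, show ε μ < r / 2 from hμ, show ε ν < r / 2 from hν]

namespace ProjTensorSquare

variable {B : Type u} [NonUnitalNormedRing B] [NormedSpace ℂ B] [IsScalarTower ℂ B B]
  [SMulCommClass ℂ B B] [CompleteSpace B] (P : ProjTensorSquare B)

theorem mem_of_isClosed_of_tmul_mem {S : Submodule ℂ P.T} (hS : IsClosed (S : Set P.T))
    (h : ∀ u v, P.tmul u v ∈ S) (s : P.T) : s ∈ S := by
  obtain ⟨u, v, -, hsum, -⟩ := P.exists_rep s 1 one_pos
  exact hS.mem_of_tendsto hsum (.of_forall fun F => S.sum_mem fun n _ => h (u n) (v n))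

theorem ext_tmul_s18 {Y : Type*} [NormedAddCommGroup Y] [NormedSpace ℂ Y] {F G : P.T →L[ℂ] Y}
    (h : ∀ u v, F (P.tmul u v) = G (P.tmul u v)) : F = G := by
  ext s
  have hs : s ∈ (F - G : P.T →L[ℂ] Y).ker :=
    P.mem_of_isClosed_of_tmul_mem (F - G).isClosed_ker (fun u v => by simp [h]) s
  simpa [sub_eq_zero] using hs

theorem tendsto_zero_of_tendsto_tmul {Y : Type*} [NormedAddCommGroup Y] [NormedSpace ℂ Y]
    {ι : Type*} {l : Filter ι} {Q : ι → P.T →L[ℂ] Y} {C : ℝ} (hQ : ∀ i, ‖Q i‖ ≤ C)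
    (h : ∀ u v, Tendsto (fun i => Q i (P.tmul u v)) l (𝓝 0)) (s : P.T) :
    Tendsto (fun i => Q i s) l (𝓝 0) := by
  have hequi : Equicontinuous ((↑) ∘ Q) :=
    ((NormedSpace.equicontinuous_TFAE Q).out 5 1).mp (⟨C, hQ⟩ : ∃ C, ∀ i, ‖Q i‖ ≤ C)
  let S : Submodule ℂ P.T :=
    { carrier := {s | Tendsto (fun i => Q i s) l (𝓝 0)}
      add_mem' := fun ha hb => by simpa using ha.add hb
      zero_mem' := by simpa using tendsto_const_nhds
      smul_mem' := fun c s hs => by simpa using hs.const_smul c }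
  exact P.mem_of_isClosed_of_tmul_mem (S := S)
    (hequi.isClosed_setOfPred_tendsto continuous_const) h s

theorem rcirc_comp_flip (a : B) : (P.rcirc a).comp P.flip = P.flip.comp (P.rmul a) :=
  P.ext_tmul_s18 fun u v => by simp [flip_tmul, rcirc_tmul, rmul_tmul]

theorem lcirc_comp_flip (a : B) : (P.lcirc a).comp P.flip = P.flip.comp (P.lmul a) :=
  P.ext_tmul_s18 fun u v => by simp [flip_tmul, lcirc_tmul, lmul_tmul]

variable {P} in
theorem IsSymmApproxDiagonal.tendsto_rcirc_sub_lcirc {ι : Type u}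
    {l : Filter ι} {t : ι → P.T} (ht : P.IsSymmApproxDiagonal l t) (a : B) :
    Tendsto (fun i => P.rcirc a (t i) - P.lcirc a (t i)) l (𝓝 0) := by
  obtain ⟨hflip, hdiag, -⟩ := ht
  have flip_eq : ∀ i, P.rcirc a (t i) - P.lcirc a (t i) =
      -P.flip (P.lmul a (t i) - P.rmul a (t i)) := fun i => by
    conv_lhs => rw [← hflip i]
    simp only [← ContinuousLinearMap.comp_apply, rcirc_comp_flip, lcirc_comp_flip]
    simp
  simpa [flip_eq] using ((P.flip.continuous.tendsto' 0 0 (map_zero _)).comp (hdiag a)).neg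

end ProjTensorSquare

namespace BanachBimodule

section Commutator

variable {B X : Type u} [NonUnitalNormedRing B] [NormedSpace ℂ B] [NormedAddCommGroup X]
  [NormedSpace ℂ X] (N : BanachBimodule B X)

noncomputable def ad (x : X) : B →L[ℂ] X := N.lsmul.flip x - N.rsmul.flip x

@[simp]
theorem ad_apply (x : X) (a : B) : N.ad x a = N.lsmul a x - N.rsmul a x := rfl

theorem norm_ad_le (x : X) : ‖N.ad x‖ ≤ (‖N.lsmul‖ + ‖N.rsmul‖) * ‖x‖ :=
  ContinuousLinearMap.opNorm_le_bound _ (by positivity) fun a => by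
    calc ‖N.lsmul a x - N.rsmul a x‖ ≤ ‖N.lsmul a x‖ + ‖N.rsmul a x‖ := norm_sub_le _ _
      _ ≤ ‖N.lsmul‖ * ‖a‖ * ‖x‖ + ‖N.rsmul‖ * ‖a‖ * ‖x‖ :=
          add_le_add (N.lsmul.le_opNorm₂ a x) (N.rsmul.le_opNorm₂ a x)
      _ = (‖N.lsmul‖ + ‖N.rsmul‖) * ‖x‖ * ‖a‖ := by ring

theorem isDerivation_ad (x : X) : N.IsDerivation (N.ad x) := fun a b => by
  simp only [ad_apply, N.lsmul_mul, N.rsmul_mul, map_sub, N.lsmul_rsmul]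
  abel

theorem mem_center_iff {x : X} : x ∈ N.center ↔ ∀ a, N.ad x a = 0 := by
  simp [center, sub_eq_zero]

theorem exists_isDerivation_of_tendsto_ad {ι : Type*} {l : Filter ι} [l.NeBot] {e : ι → X}
    {C : ℝ} (he : ∀ i, ‖e i‖ ≤ C) {f : B → X}
    (hf : ∀ a, Tendsto (fun i => N.ad (e i) a) l (𝓝 (f a))) :
    ∃ d : B →L[ℂ] X, N.IsDerivation d ∧ ⇑d = f := by
  have norm_le : ∀ a, ‖f a‖ ≤ (‖N.lsmul‖ + ‖N.rsmul‖) * C * ‖a‖ := fun a =>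
    le_of_tendsto' (hf a).norm fun i => calc
      ‖N.ad (e i) a‖ ≤ ‖N.ad (e i)‖ * ‖a‖ := (N.ad (e i)).le_opNorm a
      _ ≤ (‖N.lsmul‖ + ‖N.rsmul‖) * C * ‖a‖ := by
          gcongr
          exact (N.norm_ad_le _).trans (by gcongr; exact he i)
  let d : B →L[ℂ] X := (linearMapOfTendsto f (fun i => (N.ad (e i) : B →ₗ[ℂ] X))
    (tendsto_pi_nhds.mpr hf)).mkContinuous _ norm_le
  refine ⟨d, fun a b => tendsto_nhds_unique (hf (a * b)) ?_, rfl⟩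
  simp only [N.isDerivation_ad _ a b]
  exact (((N.rsmul b).continuous.tendsto _).comp (hf a)).add
    (((N.lsmul a).continuous.tendsto _).comp (hf b))

end Commutator

section TensorOperators

variable {B X : Type u} [NonUnitalNormedRing B] [NormedSpace ℂ B] [IsScalarTower ℂ B B]
  [SMulCommClass ℂ B B] [CompleteSpace B] [NormedAddCommGroup X] [NormedSpace ℂ X]
  [CompleteSpace X] (N : BanachBimodule B X) (P : ProjTensorSquare B)

/-- `N.psi P s x` is `ψ_x(s)`; the two arguments are swapped so that `ψ_x` is bilinear in
`(s, x)` by construction. -/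
noncomputable def psi : P.T →L[ℂ] X →L[ℂ] X :=
  (P.lift ((ContinuousLinearMap.compL ℂ X X X).bilinearComp N.lsmul N.rsmul)).choose

theorem psi_tmul (u v : B) (x : X) : N.psi P (P.tmul u v) x = N.lsmul u (N.rsmul v x) := by
  rw [psi, (P.lift _).choose_spec.1]
  rfl

noncomputable def phi (E : B →L[ℂ] X) : P.T →L[ℂ] X :=
  (P.lift (N.lsmul.bilinearComp (ContinuousLinearMap.id ℂ B) E)).choose

theorem phi_tmul (E : B →L[ℂ] X) (u v : B) : N.phi P E (P.tmul u v) = N.lsmul u (E v) := by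
  rw [phi, (P.lift _).choose_spec.1]
  rfl

variable (s : P.T) (a : B) (x : X)

theorem psi_lsmul : N.psi P s (N.lsmul a x) = N.psi P (P.rcirc a s) x := by
  have h := P.ext_tmul_s18 (F := (N.psi P).flip (N.lsmul a x))
    (G := ((N.psi P).flip x).comp (P.rcirc a))
    fun u v => by simp [psi_tmul, P.rcirc_tmul, N.lsmul_mul, N.lsmul_rsmul]
  exact congr($h s)

theorem psi_rsmul : N.psi P s (N.rsmul a x) = N.psi P (P.lcirc a s) x := by
  have h := P.ext_tmul_s18 (F := (N.psi P).flip (N.rsmul a x))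
    (G := ((N.psi P).flip x).comp (P.lcirc a))
    fun u v => by simp [psi_tmul, P.lcirc_tmul, N.rsmul_mul]
  exact congr($h s)

theorem lsmul_psi : N.lsmul a (N.psi P s x) = N.psi P (P.lmul a s) x := by
  have h := P.ext_tmul_s18 (F := (N.lsmul a).comp ((N.psi P).flip x))
    (G := ((N.psi P).flip x).comp (P.lmul a))
    fun u v => by simp [psi_tmul, P.lmul_tmul, N.lsmul_mul]
  exact congr($h s)

theorem rsmul_psi : N.rsmul a (N.psi P s x) = N.psi P (P.rmul a s) x := by
  have h := P.ext_tmul_s18 (F := (N.rsmul a).comp ((N.psi P).flip x))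
    (G := ((N.psi P).flip x).comp (P.rmul a))
    fun u v => by simp [psi_tmul, P.rmul_tmul, N.rsmul_mul, N.lsmul_rsmul]
  exact congr($h s)

theorem psi_ad : N.psi P s (N.ad x a) = N.psi P (P.rcirc a s - P.lcirc a s) x := by
  simp [psi_lsmul, psi_rsmul]

theorem ad_psi : N.ad (N.psi P s x) a = N.psi P (P.lmul a s - P.rmul a s) x := by
  simp [lsmul_psi, rsmul_psi]

end TensorOperators

section ApproxDiagonal

variable {B X : Type u} [NonUnitalNormedRing B] [NormedSpace ℂ B] [IsScalarTower ℂ B B]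
  [SMulCommClass ℂ B B] [CompleteSpace B] [NormedAddCommGroup X] [NormedSpace ℂ X]
  [CompleteSpace X] (N : BanachBimodule B X) {P : ProjTensorSquare B} {ι : Type u}
  {l : Filter ι} {t : ι → P.T}

theorem tendsto_psi_of_tendsto_zero {z : ι → P.T} (hz : Tendsto z l (𝓝 0)) (x : X) :
    Tendsto (fun i => N.psi P (z i) x) l (𝓝 0) :=
  (((N.psi P).flip x).continuous.tendsto' 0 0 (by simp)).comp hz

theorem tendsto_ad_psi (ht : P.IsSymmApproxDiagonal l t) (x : X) (a : B) :
    Tendsto (fun i => N.ad (N.psi P (t i) x) a) l (𝓝 0) := by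
  simpa only [ad_psi] using N.tendsto_psi_of_tendsto_zero (ht.2.1 a) x

theorem tendsto_psi_ad (ht : P.IsSymmApproxDiagonal l t) (x : X) (a : B) :
    Tendsto (fun i => N.psi P (t i) (N.ad x a)) l (𝓝 0) := by
  simpa only [psi_ad] using N.tendsto_psi_of_tendsto_zero (ht.tendsto_rcirc_sub_lcirc a) x

theorem mem_center_of_tendsto_psi [l.NeBot] (ht : P.IsSymmApproxDiagonal l t) {x z : X}
    (hz : Tendsto (fun i => N.psi P (t i) x) l (𝓝 z)) : z ∈ N.center :=
  N.mem_center_iff.mpr fun a => tendsto_nhds_unique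
    (((N.lsmul a - N.rsmul a).continuous.tendsto z).comp hz) (N.tendsto_ad_psi ht x a)

theorem tendsto_psi_sub_lsmul_pi {y : ι → X} {C : ℝ} (hy : ∀ i, ‖y i‖ ≤ C)
    (hc : ∀ a, Tendsto (fun i => N.ad (y i) a) l (𝓝 0)) (s : P.T) :
    Tendsto (fun i => N.psi P s (y i) - N.lsmul (P.π s) (y i)) l (𝓝 0) := by
  let Q : ι → P.T →L[ℂ] X := fun i => (N.psi P).flip (y i) - (N.lsmul.flip (y i)).comp P.π
  have hQ : ∀ i, ‖Q i‖ ≤ (‖N.psi P‖ + ‖N.lsmul‖ * ‖P.π‖) * C := fun i => by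
    have hC : 0 ≤ C := (norm_nonneg _).trans (hy i)
    refine ContinuousLinearMap.opNorm_le_bound _ (by positivity) fun s => ?_
    calc ‖Q i s‖ ≤ ‖N.psi P s (y i)‖ + ‖N.lsmul (P.π s) (y i)‖ := norm_sub_le _ _
      _ ≤ ‖N.psi P‖ * ‖s‖ * C + ‖N.lsmul‖ * (‖P.π‖ * ‖s‖) * C := by
          gcongr
          · exact ((N.psi P).le_opNorm₂ s (y i)).trans (by gcongr; exact hy i)
          · exact (N.lsmul.le_opNorm₂ _ _).trans (by gcongr; exacts [P.π.le_opNorm s, hy i])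
      _ = (‖N.psi P‖ + ‖N.lsmul‖ * ‖P.π‖) * C * ‖s‖ := by ring
  refine P.tendsto_zero_of_tendsto_tmul hQ (fun u v => ?_) s
  have hQ_tmul : ∀ i, Q i (P.tmul u v) = -N.lsmul u (N.ad (y i) v) := fun i => by
    simp [Q, psi_tmul, P.π_tmul, N.lsmul_mul]
  simpa [hQ_tmul] using (((N.lsmul u).continuous.tendsto' 0 0 (map_zero _)).comp (hc v)).neg

end ApproxDiagonal

section LieDerivation

variable {B X : Type u} [NonUnitalNormedRing B] [NormedSpace ℂ B] [IsScalarTower ℂ B B]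
  [SMulCommClass ℂ B B] [CompleteSpace B] [NormedAddCommGroup X] [NormedSpace ℂ X]
  [CompleteSpace X] {N : BanachBimodule B X} {P : ProjTensorSquare B} {E : B →L[ℂ] X}

theorem IsLieDerivation.psi_add_ad_phi (hE : N.IsLieDerivation E) (a : B) (s : P.T) :
    N.psi P s (E a) + N.ad (N.phi P E s) a =
      N.phi P E (P.lmul a s - P.rmul a s) - N.phi P E (P.rcirc a s - P.lcirc a s)
        + N.lsmul (P.π s) (E a) := by
  have key := P.ext_tmul_s18
    (F := (N.psi P).flip (E a) + (N.lsmul a - N.rsmul a).comp (N.phi P E))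
    (G := (N.phi P E).comp (P.lmul a - P.rmul a) - (N.phi P E).comp (P.rcirc a - P.lcirc a)
      + (N.lsmul.flip (E a)).comp P.π) fun u v => by
    have hLie := sub_eq_iff_eq_add.mp ((map_sub E _ _).symm.trans (hE a v))
    simp only [add_apply, sub_apply, ContinuousLinearMap.comp_apply,
      ContinuousLinearMap.flip_apply, psi_tmul, phi_tmul,
      P.lmul_tmul, P.rmul_tmul, P.rcirc_tmul, P.lcirc_tmul, P.π_tmul, N.lsmul_mul, hLie,
      ← N.lsmul_rsmul, map_add, map_sub]
    abel
  simpa using congr($key s)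

theorem IsLieDerivation.tendsto_psi_commutator {ι : Type u} {l : Filter ι} {t : ι → P.T}
    (ht : P.IsSymmApproxDiagonal l t) (hE : N.IsLieDerivation E) (a b : B) :
    Tendsto (fun i => N.psi P (t i) (E (a * b - b * a))) l (𝓝 0) := by
  have hcomm : E (a * b - b * a) = N.ad (E b) a - N.ad (E a) b := by
    rw [hE]; simp only [ad_apply]; abel
  simpa [hcomm] using (N.tendsto_psi_ad ht (E b) a).sub (N.tendsto_psi_ad ht (E a) b)

end LieDerivation

section Unital

variable {B X : Type u} [NormedRing B] [NormedSpace ℂ B] [IsScalarTower ℂ B B]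
  [SMulCommClass ℂ B B] [CompleteSpace B] [NormedAddCommGroup X] [NormedSpace ℂ X]
  [CompleteSpace X] {N : BanachBimodule B X} {P : ProjTensorSquare B} {ι : Type u}
  {l : Filter ι} {t : ι → P.T}

theorem IsLieDerivation.tendsto_psi_add_ad_phi (ht : P.IsSymmApproxDiagonal l t)
    (hN : ∀ x, N.lsmul 1 x = x) {E : B →L[ℂ] X} (hE : N.IsLieDerivation E) (a : B) :
    Tendsto (fun i => N.psi P (t i) (E a) + N.ad (N.phi P E (t i)) a) l (𝓝 (E a)) := by
  have hπ : Tendsto (fun i => P.π (t i)) l (𝓝 1) := by simpa using ht.2.2 1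
  have hdiag := (N.phi P E).continuous.tendsto' 0 0 (map_zero _) |>.comp (ht.2.1 a)
  have hsymm := (N.phi P E).continuous.tendsto' 0 0 (map_zero _) |>.comp
    (ht.tendsto_rcirc_sub_lcirc a)
  have hunit := (N.lsmul.flip (E a)).continuous.tendsto 1 |>.comp hπ
  simp only [hE.psi_add_ad_phi]
  simpa [Function.comp_def, hN] using (hdiag.sub hsymm).add hunit

/-- Substituting `x = ψ_x(t_i) + [a, e_i] + o(1)` into `ψ_x(t_μ)` gives
`ψ_x(t_μ) - ψ_x(t_i) = (π(t_μ) - 1)·ψ_x(t_i) + ψ_{e_i}(t_μ∘a - a∘t_μ) + o(1)` as `i → l`,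
and both explicit terms are small uniformly in `i` once `μ` is far out. -/
theorem exists_tendsto_psi [l.NeBot] (ht : P.IsSymmApproxDiagonal l t)
    (hN : ∀ x, N.lsmul 1 x = x) {x : X} {Cx : ℝ} (hx : ∀ i, ‖N.psi P (t i) x‖ ≤ Cx) {a : B}
    {e : ι → X} {Ce : ℝ} (he : ∀ i, ‖e i‖ ≤ Ce)
    (h : Tendsto (fun i => N.psi P (t i) x + N.ad (e i) a) l (𝓝 x)) :
    ∃ z, Tendsto (fun i => N.psi P (t i) x) l (𝓝 z) := by
  set y := fun i => N.psi P (t i) x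
  set r := fun μ => P.rcirc a (t μ) - P.lcirc a (t μ)
  have hQ := N.tendsto_psi_sub_lsmul_pi (P := P) hx (N.tendsto_ad_psi ht x)
  have hw : Tendsto (fun i => x - (y i + N.ad (e i) a)) l (𝓝 0) := by
    simpa using h.const_sub x
  have hπ : Tendsto (fun μ => ‖P.π (t μ) - 1‖) l (𝓝 0) := by
    simpa using ((ht.2.2 1).sub_const 1).norm
  have hr : Tendsto (fun μ => ‖r μ‖) l (𝓝 0) := by
    simpa using (ht.tendsto_rcirc_sub_lcirc a).norm
  refine exists_tendsto_of_dist_le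
    (ε := fun μ => ‖N.lsmul‖ * ‖P.π (t μ) - 1‖ * Cx + ‖N.psi P‖ * ‖r μ‖ * Ce)
    (by simpa using ((hπ.const_mul _).mul_const Cx).add ((hr.const_mul _).mul_const Ce))
    fun μ => ⟨fun i => ‖N.psi P (t μ) (y i) - N.lsmul (P.π (t μ)) (y i)‖
      + ‖N.psi P (t μ) (x - (y i + N.ad (e i) a))‖, ?_, fun i => ?_⟩
  · simpa using (hQ (t μ)).norm.add (N.psi P (t μ) |>.continuous.tendsto' 0 0 (map_zero _)
      |>.comp hw).norm
  have split : y μ - y i = (N.psi P (t μ) (y i) - N.lsmul (P.π (t μ)) (y i))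
      + N.psi P (t μ) (x - (y i + N.ad (e i) a))
      + (N.lsmul (P.π (t μ) - 1) (y i) + N.psi P (r μ) (e i)) := by
    simp only [r]
    rw [← psi_ad]
    simp only [y, map_sub, map_add, sub_apply, hN]
    abel
  have hunit : ‖N.lsmul (P.π (t μ) - 1) (y i)‖ ≤ ‖N.lsmul‖ * ‖P.π (t μ) - 1‖ * Cx :=
    (N.lsmul.le_opNorm₂ _ _).trans (by gcongr; exact hx i)
  have hsymm : ‖N.psi P (r μ) (e i)‖ ≤ ‖N.psi P‖ * ‖r μ‖ * Ce :=
    ((N.psi P).le_opNorm₂ _ _).trans (by gcongr; exact he i)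
  rw [dist_eq_norm, split]
  refine ((norm_add_le _ _).trans (add_le_add (norm_add_le _ _) (norm_add_le _ _))).trans ?_
  linarith

theorem IsLieDerivation.exists_isDerivation_add_trace [l.NeBot]
    (ht : P.IsSymmApproxDiagonal l t) (hN : ∀ x, N.lsmul 1 x = x)
    (hψ : ∀ x, ∃ C, ∀ i, ‖N.psi P (t i) x‖ ≤ C)
    {E : B →L[ℂ] X} (hE : N.IsLieDerivation E) (hΦ : ∃ C, ∀ i, ‖N.phi P E (t i)‖ ≤ C) :
    ∃ d τ : B →L[ℂ] X, N.IsDerivation d ∧ (∀ a, τ a ∈ N.center) ∧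
      (∀ a b, τ (a * b - b * a) = 0) ∧ E = d + τ := by
  obtain ⟨CΦ, hCΦ⟩ := hΦ
  have hlim := hE.tendsto_psi_add_ad_phi ht hN
  choose τ hτ using fun a => exists_tendsto_psi ht hN (hψ (E a)).choose_spec hCΦ (hlim a)
  obtain ⟨d, hd, hdτ⟩ := N.exists_isDerivation_of_tendsto_ad hCΦ (f := fun a => E a - τ a)
    fun a => by simpa using (hlim a).sub (hτ a)
  have hEd : ∀ a, (E - d) a = τ a := fun a => by simp [hdτ]
  refine ⟨d, E - d, hd, fun a => ?_, fun a b => ?_, by abel⟩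
  · exact hEd a ▸ N.mem_center_of_tendsto_psi ht (hτ a)
  · exact hEd _ ▸ tendsto_nhds_unique (hτ _) (hE.tendsto_psi_commutator ht a b)

end Unital

end BanachBimodule

section Unitization

variable {A : Type u} [NonUnitalNormedRing A] [NormedSpace ℂ A]

local notation "𝔸" => WithLp 1 (Unitization ℂ A)

noncomputable def unitizationFstL : 𝔸 →L[ℂ] ℂ :=
  LinearMap.mkContinuous
    { toFun := fun v => (WithLp.ofLp v).fst
      map_add' := fun _ _ => rfl
      map_smul' := fun _ _ => rfl }
    1 fun v => by
      rw [one_mul, WithLp.unitization_norm_def]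
      exact le_add_of_nonneg_right (norm_nonneg _)

noncomputable def unitizationSndL : 𝔸 →L[ℂ] A :=
  LinearMap.mkContinuous
    { toFun := fun v => (WithLp.ofLp v).snd
      map_add' := fun _ _ => rfl
      map_smul' := fun _ _ => rfl }
    1 fun v => by
      rw [one_mul, WithLp.unitization_norm_def]
      exact le_add_of_nonneg_left (norm_nonneg _)

noncomputable def unitizationInrL : A →L[ℂ] 𝔸 where
  toLinearMap :=
    (WithLp.linearEquiv 1 ℂ (Unitization ℂ A)).symm.toLinearMap ∘ₗ Unitization.inrHom ℂ ℂ A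
  cont := WithLp.unitization_isometry_inr.continuous

@[simp]
theorem unitizationFstL_apply (v : 𝔸) : unitizationFstL v = (WithLp.ofLp v).fst := rfl

@[simp]
theorem unitizationSndL_apply (v : 𝔸) : unitizationSndL v = (WithLp.ofLp v).snd := rfl

@[simp]
theorem ofLp_unitizationInrL (a : A) : WithLp.ofLp (unitizationInrL a) = (a : Unitization ℂ A) :=
  rfl

variable [IsScalarTower ℂ A A] [SMulCommClass ℂ A A]

theorem unitizationInrL_mul (a b : A) :
    unitizationInrL (a * b) = unitizationInrL a * (unitizationInrL b : 𝔸) := by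
  apply WithLp.ofLp_injective
  ext <;> simp

namespace BanachBimodule

variable {X : Type u} [NormedAddCommGroup X] [NormedSpace ℂ X] (M : BanachBimodule A X)

noncomputable def unitization : BanachBimodule 𝔸 X where
  lsmul := unitizationFstL.smulRight (ContinuousLinearMap.id ℂ X) + M.lsmul.comp unitizationSndL
  rsmul := unitizationFstL.smulRight (ContinuousLinearMap.id ℂ X) + M.rsmul.comp unitizationSndL
  lsmul_mul v w x := by
    simp only [add_apply, ContinuousLinearMap.comp_apply, ContinuousLinearMap.smulRight_apply,
      unitizationFstL_apply, unitizationSndL_apply, WithLp.unitization_mul, Unitization.fst_mul,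
      Unitization.snd_mul, map_add, map_smul, M.lsmul_mul, add_apply, smul_apply, smul_add,
      mul_smul, ContinuousLinearMap.id_apply]
    module
  rsmul_mul v w x := by
    simp only [add_apply, ContinuousLinearMap.comp_apply, ContinuousLinearMap.smulRight_apply,
      unitizationFstL_apply, unitizationSndL_apply, WithLp.unitization_mul, Unitization.fst_mul,
      Unitization.snd_mul, map_add, map_smul, M.rsmul_mul, add_apply, smul_apply, smul_add,
      mul_smul, ContinuousLinearMap.id_apply]
    module
  lsmul_rsmul v w x := by
    simp only [add_apply, ContinuousLinearMap.comp_apply, ContinuousLinearMap.smulRight_apply,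
      unitizationFstL_apply, unitizationSndL_apply, map_add, map_smul, add_apply, smul_apply,
      smul_add, ContinuousLinearMap.id_apply, M.lsmul_rsmul]
    module

theorem unitization_lsmul_apply (v : 𝔸) (x : X) : M.unitization.lsmul v x = M.uLsmul v x := rfl

theorem unitization_rsmul_apply (v : 𝔸) (x : X) : M.unitization.rsmul v x = M.uRsmul v x := rfl

theorem unitization_lsmul_one (x : X) : M.unitization.lsmul 1 x = x := by
  simp [unitization_lsmul_apply, uLsmul, show WithLp.ofLp (1 : 𝔸) = 1 from rfl]

@[simp]
theorem unitization_lsmul_inr (a : A) (x : X) :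
    M.unitization.lsmul (unitizationInrL a) x = M.lsmul a x := by
  simp [unitization_lsmul_apply, uLsmul]

@[simp]
theorem unitization_rsmul_inr (a : A) (x : X) :
    M.unitization.rsmul (unitizationInrL a) x = M.rsmul a x := by
  simp [unitization_rsmul_apply, uRsmul]

theorem mem_center_of_mem_unitization_center {x : X} (hx : x ∈ M.unitization.center) :
    x ∈ M.center := fun a => by simpa using hx (unitizationInrL a)

theorem IsDerivation.comp_unitizationInrL {M : BanachBimodule A X} {d : 𝔸 →L[ℂ] X}
    (hd : M.unitization.IsDerivation d) : M.IsDerivation (d.comp unitizationInrL) := fun a b => by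
  simpa [unitizationInrL_mul] using hd (unitizationInrL a) (unitizationInrL b)

theorem IsLieDerivation.unitization {M : BanachBimodule A X} {D : A →L[ℂ] X}
    (hD : M.IsLieDerivation D) : M.unitization.IsLieDerivation (D.comp unitizationSndL) :=
  fun v w => by
    have hsnd : (WithLp.ofLp (v * w - w * v)).snd =
        (WithLp.ofLp v).snd * (WithLp.ofLp w).snd
          - (WithLp.ofLp w).snd * (WithLp.ofLp v).snd := by
      rw [WithLp.ofLp_sub, WithLp.unitization_mul, WithLp.unitization_mul, sub_eq_add_neg,
        Unitization.snd_add, Unitization.snd_neg, Unitization.snd_mul, Unitization.snd_mul]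
      abel
    simp only [ContinuousLinearMap.comp_apply, unitizationSndL_apply, hsnd,
      unitization_lsmul_apply, unitization_rsmul_apply, uLsmul, uRsmul, WithLp.equiv_apply]
    rw [hD]
    abel

end BanachBimodule

end Unitization

/-- Let `𝔘` be a Banach algebra whose `ℓ¹`-unitization `𝔘♯` is symmetrically
pseudo-amenable with a symmetric approximate diagonal `{t_λ}`.  Suppose `X` is a Banach
`𝔘`-bimodule such that for each `x ∈ X` the net `{ψ_x(t_λ)}` is bounded, and `D : 𝔘 → X` is a
bounded Lie derivation such that `{Φ_D(t_λ)}` is bounded.  Then there exist a bounded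
derivation `d : 𝔘 → X` and a bounded central trace `τ : 𝔘 → Z_𝔘(X)` with `D = d + τ`. -/
theorem lieDerivation_decomposition {A X : Type u} [NonUnitalNormedRing A] [NormedSpace ℂ A]
    [IsScalarTower ℂ A A] [SMulCommClass ℂ A A] [CompleteSpace A]
    [NormedAddCommGroup X] [NormedSpace ℂ X] [CompleteSpace X]
    (P : ProjTensorSquare (WithLp 1 (Unitization ℂ A))) (M : BanachBimodule A X)
    {ι : Type u} (l : Filter ι) [l.NeBot] (t : ι → P.T)
    (ht : P.IsSymmApproxDiagonal l t)
    (hψ : ∀ x : X, ∀ g : P.T →L[ℂ] X,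
      (∀ a b, g (P.tmul a b) = M.uLsmul a (M.uRsmul b x)) → ∃ C, ∀ i, ‖g (t i)‖ ≤ C)
    (D : A →L[ℂ] X) (hD : M.IsLieDerivation D)
    (hΦ : ∀ g : P.T →L[ℂ] X,
      (∀ a b, g (P.tmul a b) =
        M.uLsmul a (D ((WithLp.equiv 1 (Unitization ℂ A)) b).snd)) →
      ∃ C, ∀ i, ‖g (t i)‖ ≤ C) :
    ∃ (d : A →L[ℂ] X) (τ : A →L[ℂ] X), M.IsDerivation d ∧
      (∀ a, τ a ∈ M.center) ∧ (∀ a b : A, τ (a * b - b * a) = 0) ∧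
      ∀ a, D a = d a + τ a := by
  obtain ⟨d, τ, hd, hτ_center, hτ_trace, hD_eq⟩ :=
    hD.unitization.exists_isDerivation_add_trace ht M.unitization_lsmul_one
      (fun x => hψ x ((M.unitization.psi P).flip x) fun a b => M.unitization.psi_tmul P a b x)
      (hΦ _ fun a b => M.unitization.phi_tmul P _ a b)
  refine ⟨d.comp unitizationInrL, τ.comp unitizationInrL, hd.comp_unitizationInrL,
    fun a => M.mem_center_of_mem_unitization_center (hτ_center _), fun a b => ?_, fun a => ?_⟩
  · simpa [unitizationInrL_mul] using hτ_trace (unitizationInrL a) (unitizationInrL b)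
  · simpa using congr($hD_eq (unitizationInrL a))
end
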